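/- Let M be a chain complex of R-modules, N an R-module, and n an integer. Then the disc complex \overline{N}[n] (with N in degrees n+1 and n connected by the identity) lies in the subprojectivity domain of M in the category of complexes if and only if N lies in the subprojectivity domain of the module M_n. -/

import Mathlib

open CategoryTheory CategoryTheory.Limits

universe u

/-- `N` belongs to the subprojectivity domain of `M`: every morphism `M ⟶ N` factors
through a projective object. -/
def SubprojDomain {A : Type*} [Category A] (M N : A) : Prop :=
  ∀ f : M ⟶ N, ∃ (P : A) (_ : Projective P) (a : M ⟶ P) (b : P ⟶ N), a ≫ b = f

/-- The disc complex `\overline{N}[n]`: the module `N` placed in degrees `n+1` and `n`,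
connected by the identity, and `0` elsewhere. -/
def disc {R : Type u} [Ring R] (N : ModuleCat.{u} R) (n : ℤ) :
    ChainComplex (ModuleCat.{u} R) ℤ where
  X i := if i = n + 1 ∨ i = n then N else ModuleCat.of R PUnit
  d i j :=
    if h : i = n + 1 ∧ j = n then
      eqToHom (if_pos (Or.inl h.1)) ≫ eqToHom (if_pos (Or.inr h.2)).symm
    else 0
  shape i j h := by
    rw [dif_neg]
    rintro ⟨rfl, rfl⟩
    exact h rfl
  d_comp_d' i j k hij hjk := by
    simp only [ComplexShape.down_Rel] at hij hjk
    by_cases hc : j = n + 1 ∧ k = n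
    · rw [dif_neg (by omega), zero_comp]
    · rw [dif_neg hc, comp_zero]

/-! Evaluation in degree `n`, the disc functor `N ↦ \overline{N}[n]` and evaluation in degree
`n + 1` form an adjoint triple `ev_n ⊣ D_n ⊣ ev_{n+1}`. Evaluation preserves epimorphisms, and
so does the left adjoint `D_n`; hence `ev_n` and `D_n` have epi-preserving right adjoints and
therefore preserve projectives. Along an
adjunction `F ⊣ G` of projective-preserving functors, the hom-set bijection turns a factorization
of `M ⟶ G N` through a projective `P` into one of `F M ⟶ N` through `F P`, and a factorization
of `F M ⟶ N` through `P` into one of `M ⟶ G N` through `G P`. -/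

theorem CategoryTheory.Adjunction.subprojDomain_iff {C D : Type*} [Category C] [Category D]
    {F : C ⥤ D} {G : D ⥤ C} (adj : F ⊣ G) [F.PreservesProjectiveObjects]
    [G.PreservesProjectiveObjects] (M : C) (N : D) :
    SubprojDomain M (G.obj N) ↔ SubprojDomain (F.obj M) N := by
  constructor
  · intro h f
    obtain ⟨P, hP, a, b, hab⟩ := h (adj.homEquiv _ _ f)
    refine ⟨F.obj P, F.projective_obj_of_projective hP, F.map a, (adj.homEquiv _ _).symm b, ?_⟩
    rw [← adj.homEquiv_naturality_left_symm, hab, Equiv.symm_apply_apply]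
  · intro h g
    obtain ⟨P, hP, a, b, hab⟩ := h ((adj.homEquiv _ _).symm g)
    refine ⟨G.obj P, G.projective_obj_of_projective hP, adj.homEquiv _ _ a, G.map b, ?_⟩
    rw [← adj.homEquiv_naturality_right, hab, Equiv.apply_symm_apply]

namespace disc

open HomologicalComplex

variable {R : Type u} [Ring R]

def XIso (N : ModuleCat.{u} R) (n : ℤ) {i : ℤ} (h : i = n + 1 ∨ i = n) :
    (disc N n).X i ≅ N :=
  eqToIso (if_pos h)

lemma d_succ (N : ModuleCat.{u} R) (n : ℤ) :
    (disc N n).d (n + 1) n = (XIso N n (.inl rfl)).hom ≫ (XIso N n (.inr rfl)).inv :=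
  dif_pos ⟨rfl, rfl⟩

lemma d_eq_zero (N : ModuleCat.{u} R) (n : ℤ) {i j : ℤ} (h : ¬(i = n + 1 ∧ j = n)) :
    (disc N n).d i j = 0 :=
  dif_neg h

lemma isZero_X (N : ModuleCat.{u} R) (n : ℤ) {i : ℤ} (h : ¬(i = n + 1 ∨ i = n)) :
    IsZero ((disc N n).X i) := by
  rw [show (disc N n).X i = ModuleCat.of R PUnit from if_neg h]
  exact ModuleCat.isZero_of_subsingleton _

section Hom

variable {M : ChainComplex (ModuleCat.{u} R) ℤ} {N P : ModuleCat.{u} R}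
  {C : ChainComplex (ModuleCat.{u} R) ℤ} {n : ℤ}

lemma to_hom_f_succ (φ : M ⟶ disc N n) :
    φ.f (n + 1) =
      M.d (n + 1) n ≫ φ.f n ≫ (XIso N n (.inr rfl)).hom ≫ (XIso N n (.inl rfl)).inv := by
  rw [← φ.comm_assoc, d_succ]
  simp

lemma from_hom_f_self (φ : disc P n ⟶ C) :
    φ.f n =
      (XIso P n (.inr rfl)).hom ≫ (XIso P n (.inl rfl)).inv ≫ φ.f (n + 1) ≫
        C.d (n + 1) n := by
  rw [φ.comm, d_succ]
  simp

lemma to_hom_ext {φ φ' : M ⟶ disc N n} (h : φ.f n = φ'.f n) : φ = φ' := by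
  ext i : 1
  by_cases hi : i = n + 1 ∨ i = n
  · obtain rfl | rfl := hi
    · rw [to_hom_f_succ φ, to_hom_f_succ φ', h]
    · exact h
  · exact (isZero_X N n hi).eq_of_tgt _ _

lemma from_hom_ext {φ φ' : disc P n ⟶ C} (h : φ.f (n + 1) = φ'.f (n + 1)) : φ = φ' := by
  ext i : 1
  by_cases hi : i = n + 1 ∨ i = n
  · obtain rfl | rfl := hi
    · exact h
    · rw [from_hom_f_self φ, from_hom_f_self φ', h]
  · exact (isZero_X P n hi).eq_of_src _ _

def lift (f : M.X n ⟶ N) : M ⟶ disc N n where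
  f i :=
    if h : i = n + 1 then
      eqToHom (congrArg M.X h) ≫ M.d (n + 1) n ≫ f ≫ (XIso N n (.inl h)).inv
    else if h : i = n then
      eqToHom (congrArg M.X h) ≫ f ≫ (XIso N n (.inr h)).inv
    else 0
  comm' i j hij := by
    obtain rfl : i = j + 1 := hij.symm
    by_cases hj : j = n + 1 ∨ j = n
    · obtain rfl | rfl := hj
      · rw [dif_neg (by omega), dif_pos rfl, d_eq_zero N _ (by omega)]
        simp
      · rw [dif_pos rfl, dif_neg (by omega), dif_pos rfl, d_succ]
        simp [XIso]
    · exact (isZero_X N n hj).eq_of_tgt _ _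

@[simp]
lemma lift_f_self (f : M.X n ⟶ N) : (lift f).f n = f ≫ (XIso N n (.inr rfl)).inv := by
  simp [lift]

@[simp]
lemma lift_f_succ (f : M.X n ⟶ N) :
    (lift f).f (n + 1) = M.d (n + 1) n ≫ f ≫ (XIso N n (.inl rfl)).inv := by
  simp [lift]

def desc (g : P ⟶ C.X (n + 1)) : disc P n ⟶ C where
  f i :=
    if h : i = n + 1 then
      (XIso P n (.inl h)).hom ≫ g ≫ eqToHom (congrArg C.X h.symm)
    else if h : i = n then
      (XIso P n (.inr h)).hom ≫ g ≫ C.d (n + 1) n ≫ eqToHom (congrArg C.X h.symm)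
    else 0
  comm' i j hij := by
    obtain rfl : i = j + 1 := hij.symm
    by_cases hi : j + 1 = n + 1 ∨ j + 1 = n
    · obtain h | rfl := hi
      · obtain rfl : j = n := by omega
        rw [dif_pos rfl, dif_neg (by omega), dif_pos rfl, d_succ]
        simp [XIso]
      · rw [dif_neg (by omega), dif_pos rfl, d_eq_zero P _ (by omega)]
        simp
    · exact (isZero_X P n hi).eq_of_src _ _

@[simp]
lemma desc_f_succ (g : P ⟶ C.X (n + 1)) :
    (desc g).f (n + 1) = (XIso P n (.inl rfl)).hom ≫ g := by
  simp [desc]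

variable (M N P C)

@[simps]
def liftEquiv : (M.X n ⟶ N) ≃ (M ⟶ disc N n) where
  toFun := lift
  invFun φ := φ.f n ≫ (XIso N n (.inr rfl)).hom
  left_inv f := by simp
  right_inv φ := to_hom_ext (by simp)

@[simps]
def descEquiv : (disc P n ⟶ C) ≃ (P ⟶ C.X (n + 1)) where
  toFun φ := (XIso P n (.inl rfl)).inv ≫ φ.f (n + 1)
  invFun := desc
  left_inv φ := from_hom_ext (by simp)
  right_inv g := by simp

variable {M N P C}

lemma liftEquiv_symm_comp {M' : ChainComplex (ModuleCat.{u} R) ℤ} (f : M' ⟶ M)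
    (φ : M ⟶ disc N n) :
    (liftEquiv M' N).symm (f ≫ φ) = f.f n ≫ (liftEquiv M N).symm φ := by
  simp

lemma lift_comp {N' : ModuleCat.{u} R} (f : M.X n ⟶ N) (g : N ⟶ N') :
    lift (f ≫ g) = lift f ≫ lift ((XIso N n (.inr rfl)).hom ≫ g) :=
  to_hom_ext (by simp)

lemma desc_comp {P' : ModuleCat.{u} R} (f : P' ⟶ P) (g : P ⟶ C.X (n + 1)) :
    desc (f ≫ g) = lift ((XIso P' n (.inr rfl)).hom ≫ f) ≫ desc g :=
  from_hom_ext (by simp [d_succ])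

lemma descEquiv_comp {C' : ChainComplex (ModuleCat.{u} R) ℤ} (φ : disc P n ⟶ C)
    (ψ : C ⟶ C') :
    descEquiv P C' (φ ≫ ψ) = descEquiv P C φ ≫ ψ.f (n + 1) := by
  simp

end Hom

variable (R) (n : ℤ)

def functor : ModuleCat.{u} R ⥤ ChainComplex (ModuleCat.{u} R) ℤ where
  obj N := disc N n
  map g := lift ((XIso _ n (.inr rfl)).hom ≫ g)
  map_id N := to_hom_ext (by simp)
  map_comp f g := to_hom_ext (by simp)

def evalAdjunction : eval _ _ n ⊣ functor R n :=
  Adjunction.mkOfHomEquiv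
    { homEquiv M N := liftEquiv M N
      homEquiv_naturality_left_symm := liftEquiv_symm_comp
      homEquiv_naturality_right := lift_comp }

def adjunctionEvalSucc : functor R n ⊣ eval _ _ (n + 1) :=
  Adjunction.mkOfHomEquiv
    { homEquiv P C := descEquiv P C
      homEquiv_naturality_left_symm := desc_comp
      homEquiv_naturality_right := descEquiv_comp }

instance : (functor R n).PreservesEpimorphisms :=
  Functor.preservesEpimorphisms_of_adjunction (adjunctionEvalSucc R n)

instance : (functor R n).PreservesProjectiveObjects :=
  Functor.preservesProjectiveObjects_of_adjunction_of_preservesEpimorphisms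
    (adjunctionEvalSucc R n)

instance : (eval (ModuleCat.{u} R) (ComplexShape.down ℤ) n).PreservesProjectiveObjects :=
  Functor.preservesProjectiveObjects_of_adjunction_of_preservesEpimorphisms (evalAdjunction R n)

end disc

/-- the disc complex `\overline{N}[n]` lies in the subprojectivity domain of
the complex `M` iff the module `N` lies in the subprojectivity domain of `M_n`. -/
theorem disc_subprojDomain_iff
    {R : Type u} [Ring R] (M : ChainComplex (ModuleCat.{u} R) ℤ) (N : ModuleCat.{u} R)
    (n : ℤ) :
    SubprojDomain M (disc N n) ↔ SubprojDomain (M.X n) N :=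
  (disc.evalAdjunction R n).subprojDomain_iff M N
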